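/- Let A be a Schur ring over a torsion-free abelian group G. Then A is closed under all Frobenius maps: for every α = Σ α_g g in A and every integer m, the element α^(m) = Σ α_g g^m lies in A. -/

import Mathlib

noncomputable def simpleQuantity (F : Type*) [Field F] {G : Type*} [Group G]
    (D : Finset G) : MonoidAlgebra F G :=
  ∑ g ∈ D, MonoidAlgebra.single g 1

structure SchurRing (F G : Type*) [Field F] [Group G] where
  parts : Set (Finset G)
  parts_nonempty : ∀ D ∈ parts, D.Nonempty
  cover : ∀ g : G, ∃ D ∈ parts, g ∈ D
  eq_of_mem : ∀ D₁ ∈ parts, ∀ D₂ ∈ parts, ∀ g : G, g ∈ D₁ → g ∈ D₂ → D₁ = D₂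
  one_mem : ({1} : Finset G) ∈ parts
  inv_mem : ∀ D ∈ parts, ∃ D' ∈ parts, ∀ g : G, g ∈ D' ↔ g⁻¹ ∈ D
  mul_mem : ∀ x ∈ Submodule.span F (simpleQuantity F '' parts),
    ∀ y ∈ Submodule.span F (simpleQuantity F '' parts),
    x * y ∈ Submodule.span F (simpleQuantity F '' parts)

noncomputable def SchurRing.span {F G : Type*} [Field F] [Group G] (A : SchurRing F G) :
    Submodule F (MonoidAlgebra F G) :=
  Submodule.span F (simpleQuantity F '' A.parts)

def SchurRing.IsASet {F G : Type*} [Field F] [Group G] (A : SchurRing F G)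
    (S : Set G) : Prop :=
  ∀ D ∈ A.parts, (∃ g ∈ D, g ∈ S) → ↑D ⊆ S

/-- The old Mathlib `Monoid.IsTorsionFree` (removed since): no nontrivial element has finite order. -/
def Monoid.IsTorsionFree (G : Type*) [Monoid G] : Prop :=
  ∀ g : G, g ≠ 1 → ¬IsOfFinOrder g

/-! For a prime `p` and a part `D`, the integral coefficients of `D ^ p` are congruent mod `p`
to those of `D^(p) = Σ_{g ∈ D} g ^ p` (Frobenius in characteristic `p`). Since `D ^ p ∈ A`, they
are constant on parts; and torsion-freeness makes `g ↦ g ^ p` injective, so the coefficients of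
`D^(p)` are `0` or `1`, and congruence mod `p` of such numbers is equality. Hence `D^(p)` is
constant on parts, i.e. lies in `A`. Frobenius maps compose, so every `g ↦ g ^ n` preserves `A`;
`g ↦ g⁻¹` does because the partition is closed under inverses. -/

open MonoidAlgebra

theorem Monoid.IsTorsionFree.pow_injective {G : Type*} [CommGroup G]
    (hG : Monoid.IsTorsionFree G) {n : ℕ} (hn : n ≠ 0) :
    Function.Injective fun g : G ↦ g ^ n := by
  intro a b (hab : a ^ n = b ^ n)
  by_contra hne
  refine hG (a * b⁻¹) (mul_inv_eq_one.not.mpr hne) ?_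
  exact isOfFinOrder_iff_pow_eq_one.mpr
    ⟨n, Nat.pos_of_ne_zero hn, by rw [mul_pow, inv_pow, hab, mul_inv_cancel]⟩

theorem MonoidAlgebra.mapDomain_comp {R M : Type*} [Semiring R] (f g : M → M) :
    mapDomain (R := R) (g ∘ f) = mapDomain g ∘ mapDomain f := by
  funext x
  ext
  simp [Finsupp.mapDomain_comp]

section SimpleQuantity

variable {K G : Type*} [Field K] [Group G]

theorem coeff_simpleQuantity [DecidableEq G] (D : Finset G) (x : G) :
    (simpleQuantity K D).coeff x = if x ∈ D then 1 else 0 := by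
  simp [simpleQuantity, Finsupp.single_apply]

theorem coeff_simpleQuantity_eq_coeff_iff (E : Finset G) (g h : G) :
    (simpleQuantity K E).coeff g = (simpleQuantity K E).coeff h ↔ (g ∈ E ↔ h ∈ E) := by
  classical
  simp only [coeff_simpleQuantity]
  split_ifs <;> simp_all

theorem mapDomain_simpleQuantity_eq_sum (f : G → G) (D : Finset G) :
    mapDomain f (simpleQuantity K D) = ∑ g ∈ D, single (f g) 1 :=
  map_sum (mapDomainLinearMap K K f) _ D |>.trans (by simp)

theorem mapDomain_simpleQuantity [DecidableEq G] {f : G → G} {D : Finset G}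
    (hf : Set.InjOn f D) :
    mapDomain f (simpleQuantity K D) = simpleQuantity K (D.image f) := by
  rw [mapDomain_simpleQuantity_eq_sum, simpleQuantity, Finset.sum_image hf]

theorem coeff_simpleQuantity_pow (D : Finset G) (n : ℕ) (x : G) :
    (simpleQuantity K D ^ n).coeff x = (((∑ g ∈ D, single g (1 : ℤ)) ^ n).coeff x : K) := by
  have : simpleQuantity K D = mapRingHom G (Int.castRingHom K) (∑ g ∈ D, single g 1) := by
    simp [simpleQuantity, map_sum]
  rw [this, ← map_pow, coeff_mapRingHom, eq_intCast]

end SimpleQuantity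

section Frobenius

variable {K G : Type*} [Field K] [CommGroup G]

theorem simpleQuantity_pow_char (p : ℕ) [Fact p.Prime] [CharP K p] (D : Finset G) :
    simpleQuantity K D ^ p = mapDomain (· ^ p) (simpleQuantity K D) := by
  have := charP_of_injective_algebraMap' K (A := MonoidAlgebra K G) p
  rw [mapDomain_simpleQuantity_eq_sum, simpleQuantity, sum_pow_char]
  simp [single_pow]

end Frobenius

namespace SchurRing

section Group

variable {K G : Type*} [Field K] [Group G] (A : SchurRing K G)

theorem simpleQuantity_mem_span {D : Finset G} (hD : D ∈ A.parts) :
    simpleQuantity K D ∈ A.span :=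
  Submodule.subset_span ⟨D, hD, rfl⟩

def constOnParts : Submodule K (MonoidAlgebra K G) where
  carrier := {x | ∀ D ∈ A.parts, ∀ g ∈ D, ∀ h ∈ D, x.coeff g = x.coeff h}
  add_mem' hx hy D hD g hg h hh := by
    simp only [coeff_add, Finsupp.add_apply, hx D hD g hg h hh, hy D hD g hg h hh]
  zero_mem' _ _ _ _ _ _ := rfl
  smul_mem' c x hx D hD g hg h hh := by
    simp only [coeff_smul, Finsupp.smul_apply, hx D hD g hg h hh]

theorem simpleQuantity_mem_constOnParts {D : Finset G} (hD : D ∈ A.parts) :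
    simpleQuantity K D ∈ A.constOnParts := by
  intro D' hD' g hg h hh
  rw [coeff_simpleQuantity_eq_coeff_iff]
  constructor
  · intro hgD
    exact A.eq_of_mem D' hD' D hD g hg hgD ▸ hh
  · intro hhD
    exact A.eq_of_mem D' hD' D hD h hh hhD ▸ hg

theorem mem_span_of_mem_constOnParts {x : MonoidAlgebra K G} (hx : x ∈ A.constOnParts) :
    x ∈ A.span := by
  classical
  obtain rfl | ⟨g, hg⟩ := eq_or_ne x 0 |>.imp_right fun hx0 ↦
    Finsupp.support_nonempty_iff.mpr (mt MonoidAlgebra.coeff_eq_zero.mp hx0)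
  · exact zero_mem _
  obtain ⟨D, hD, hgD⟩ := A.cover g
  set y := x - x.coeff g • simpleQuantity K D with hy_def
  have hy : y ∈ A.constOnParts :=
    sub_mem hx (Submodule.smul_mem _ _ (A.simpleQuantity_mem_constOnParts hD))
  -- subtracting `x g • D` clears the whole part `D` from the support
  have hsupp : y.coeff.support ⊆ x.coeff.support.erase g := by
    intro z hz
    rw [Finsupp.mem_support_iff, hy_def, coeff_sub, coeff_smul, Finsupp.sub_apply,
      Finsupp.smul_apply, coeff_simpleQuantity, smul_eq_mul] at hz
    by_cases hzD : z ∈ D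
    · simp [hzD, hx D hD z hzD g hgD] at hz
    · simp only [hzD, if_false, mul_zero, sub_zero] at hz
      exact Finset.mem_erase.mpr ⟨fun h ↦ hzD (h ▸ hgD), Finsupp.mem_support_iff.mpr hz⟩
  have : y.coeff.support.card < x.coeff.support.card :=
    (Finset.card_le_card hsupp).trans_lt (Finset.card_erase_lt_of_mem hg)
  rw [← sub_add_cancel x (x.coeff g • simpleQuantity K D)]
  exact add_mem (mem_span_of_mem_constOnParts hy)
    (Submodule.smul_mem _ _ (A.simpleQuantity_mem_span hD))
termination_by x.coeff.support.card

theorem span_eq_constOnParts : A.span = A.constOnParts := by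
  refine le_antisymm (Submodule.span_le.mpr ?_) fun _ ↦ A.mem_span_of_mem_constOnParts
  rintro _ ⟨D, hD, rfl⟩
  exact A.simpleQuantity_mem_constOnParts hD

theorem mem_span_iff {x : MonoidAlgebra K G} :
    x ∈ A.span ↔ ∀ D ∈ A.parts, ∀ g ∈ D, ∀ h ∈ D, x.coeff g = x.coeff h := by
  rw [span_eq_constOnParts]
  rfl

theorem one_mem_span : (1 : MonoidAlgebra K G) ∈ A.span := by
  simpa [simpleQuantity, one_def] using A.simpleQuantity_mem_span A.one_mem

theorem mapsTo_mapDomain {f : G → G}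
    (hf : ∀ D ∈ A.parts, mapDomain f (simpleQuantity K D) ∈ A.span) :
    Set.MapsTo (mapDomain f) (A.span : Set (MonoidAlgebra K G)) A.span := fun _ hx ↦
  (Submodule.span_le (p := A.span.comap (mapDomainLinearMap K K f))).mpr
    (by rintro _ ⟨D, hD, rfl⟩; exact hf D hD) hx

theorem mapsTo_mapDomain_inv :
    Set.MapsTo (mapDomain (·⁻¹)) (A.span : Set (MonoidAlgebra K G)) A.span := by
  classical
  refine A.mapsTo_mapDomain fun D hD ↦ ?_
  obtain ⟨D', hD', hD'_iff⟩ := A.inv_mem D hD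
  rw [mapDomain_simpleQuantity inv_injective.injOn]
  convert A.simpleQuantity_mem_span hD'
  ext g
  rw [hD'_iff, Finset.mem_image]
  exact ⟨fun ⟨a, ha, hag⟩ ↦ hag ▸ (inv_inv a).symm ▸ ha, fun h ↦ ⟨g⁻¹, h, inv_inv g⟩⟩

theorem pow_mem_span {x : MonoidAlgebra K G} (hx : x ∈ A.span) (n : ℕ) : x ^ n ∈ A.span := by
  induction n with
  | zero => exact pow_zero x ▸ A.one_mem_span
  | succ n ih => rw [pow_succ]; exact A.mul_mem _ ih _ hx

end Group

section CommGroup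

variable {K G : Type*} [Field K] [CommGroup G] (A : SchurRing K G)

theorem mapDomain_pow_simpleQuantity_mem_span [CharZero K]
    (hG : Monoid.IsTorsionFree G) {p : ℕ} (hp : p.Prime) {D : Finset G} (hD : D ∈ A.parts) :
    mapDomain (· ^ p) (simpleQuantity K D) ∈ A.span := by
  classical
  have := Fact.mk hp
  have hinj := (hG.pow_injective hp.ne_zero).injOn (s := D)
  set z := (∑ g ∈ D, single g (1 : ℤ)) ^ p
  rw [mapDomain_simpleQuantity hinj, mem_span_iff]
  intro D' hD' g hg h hh
  have hz : z.coeff g = z.coeff h := by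
    have hDp := A.pow_mem_span (A.simpleQuantity_mem_span hD) p
    have := A.mem_span_iff.mp hDp D' hD' g hg h hh
    rwa [coeff_simpleQuantity_pow, coeff_simpleQuantity_pow, Int.cast_inj] at this
  -- over `ZMod p`, the simple quantity of `D.image (· ^ p)` is `D ^ p`
  rw [coeff_simpleQuantity_eq_coeff_iff, ← coeff_simpleQuantity_eq_coeff_iff (K := ZMod p),
    ← mapDomain_simpleQuantity hinj, ← simpleQuantity_pow_char, coeff_simpleQuantity_pow,
    coeff_simpleQuantity_pow, hz]

theorem mapsTo_mapDomain_pow [CharZero K] (hG : Monoid.IsTorsionFree G) (n : ℕ) :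
    Set.MapsTo (mapDomain (· ^ n)) (A.span : Set (MonoidAlgebra K G)) A.span := by
  induction n using induction_on_primes with
  | zero =>
    refine A.mapsTo_mapDomain fun D _ ↦ ?_
    rw [mapDomain_simpleQuantity_eq_sum, Finset.sum_congr rfl fun g _ ↦ by rw [pow_zero],
      Finset.sum_const, ← one_def]
    exact Submodule.smul_of_tower_mem _ _ A.one_mem_span
  | one =>
    intro x hx
    rwa [show (· ^ 1 : G → G) = id from funext pow_one, mapDomain, Finsupp.mapDomain_id,
      ofCoeff_coeff]
  | prime_mul p n hp ih =>
    have : (· ^ (p * n) : G → G) = (· ^ n) ∘ (· ^ p) := funext fun g ↦ pow_mul g p n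
    rw [this, mapDomain_comp]
    exact ih.comp <| A.mapsTo_mapDomain fun D hD ↦
      A.mapDomain_pow_simpleQuantity_mem_span hG hp hD

end CommGroup

end SchurRing

/-- Schur rings over torsion-free abelian groups are closed under all Frobenius
maps `Σ α_g g ↦ Σ α_g g^m`. -/
theorem frobenius_mem {F G : Type*} [Field F] [CharZero F] [CommGroup G]
    (hTF : Monoid.IsTorsionFree G) (A : SchurRing F G)
    (α : MonoidAlgebra F G) (hα : α ∈ A.span) (m : ℤ) :
    MonoidAlgebra.ofCoeff (Finsupp.mapDomain (fun g : G => g ^ m) α.coeff) ∈ A.span := by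
  change mapDomain _ α ∈ A.span
  obtain ⟨n, rfl | rfl⟩ := m.eq_nat_or_neg
  · simpa only [zpow_natCast, SetLike.mem_coe] using A.mapsTo_mapDomain_pow hTF n hα
  · have : (fun g : G ↦ g ^ (-n : ℤ)) = (·⁻¹) ∘ (· ^ n) := funext fun g ↦ by simp
    rw [this, mapDomain_comp]
    exact A.mapsTo_mapDomain_inv.comp (A.mapsTo_mapDomain_pow hTF n) hα
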